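/- arXiv:1009.3128 — 2 statements merged into one kernel-verified Lean document; each statement's English description precedes it below -/
import Mathlib

section
/- Let ϑ, τ > 0 be real numbers, k ∈ ℝ, and m a nonnegative integer. Then there is a constant C > 0 such that for all z in the open unit ball, ∑_{i=0}^{m} ω_{ϑ-i}(z)·ω_{τ+i-k}(z) ≤ C·(ω_{ϑ-m}(z) + ω_{τ-k}(z)). -/
/-!
Put `u = 1 - |z|² ∈ (0, 1]`. Then `ω_t ≥ u ^ min(t, 0)`, and `ω_t ≤ C_ε u ^ (min(t, 0) - ε)` for
every `ε > 0`, the loss `ε` being needed only for the logarithm at `t = 0`. In the `i`-th term write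
`a = ϑ - i` and `b = τ + i - k`, so that `ϑ - m ≤ a`, `τ - k ≤ b` and `a + b = ϑ + (τ - k)`.
If `a > 0` (resp. `b > 0`) one factor is `1` and the other is dominated by `ω_{τ-k}`
(resp. `ω_{ϑ-m}`); if `a, b ≤ 0` the product is at most `C u ^ (a + b - ϑ) = C u ^ (τ - k)`,
the margin `ϑ > 0` absorbing both logarithms.
-/

open MeasureTheory Metric

/-- The weight function `ω_t`: `ω_t(z) = (1-|z|²)^{min(t,0)}` if `t ≠ 0`,
and `ω_0(z) = log(e/(1-|z|²))`, expressed in terms of `x = ‖z‖`. -/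
noncomputable def omegaW (t x : ℝ) : ℝ :=
  if t = 0 then Real.log (Real.exp 1 / (1 - x ^ 2)) else (1 - x ^ 2) ^ (min t 0)

open Real Set

/-- `omegaW t x = omegaU t (1 - x ^ 2)` holds by `rfl`. -/
noncomputable def omegaU (t u : ℝ) : ℝ :=
  if t = 0 then log (exp 1 / u) else u ^ min t 0

section omegaU

variable {t u : ℝ}

lemma log_exp_div_eq (hu : 0 < u) : log (exp 1 / u) = 1 + log u⁻¹ := by
  rw [log_div (exp_ne_zero 1) hu.ne', log_exp, log_inv, sub_eq_add_neg]

lemma one_le_log_exp_div (hu : u ∈ Ioc 0 1) : 1 ≤ log (exp 1 / u) := by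
  rw [log_exp_div_eq hu.1]
  linarith [log_nonneg (one_le_inv_iff₀.2 hu)]

lemma log_exp_div_le (hu : u ∈ Ioc 0 1) {ε : ℝ} (hε : 0 < ε) :
    log (exp 1 / u) ≤ (1 + 1 / ε) * u ^ (-ε) := by
  have hone : 1 ≤ u ^ (-ε) := one_le_rpow_of_pos_of_le_one_of_nonpos hu.1 hu.2 (by linarith)
  have hlog : log u⁻¹ ≤ u ^ (-ε) / ε := by
    simpa [rpow_neg hu.1.le, inv_rpow hu.1.le] using
      log_le_rpow_div (inv_nonneg.2 hu.1.le) hε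
  rw [log_exp_div_eq hu.1, add_mul, one_mul, one_div_mul_eq_div]
  linarith

lemma rpow_le_omegaU (hu : u ∈ Ioc 0 1) {e : ℝ} (he : min t 0 ≤ e) : u ^ e ≤ omegaU t u := by
  refine (rpow_le_rpow_of_exponent_ge hu.1 hu.2 he).trans ?_
  unfold omegaU
  split_ifs with ht
  · simpa [ht] using one_le_log_exp_div hu
  · rfl

lemma omegaU_pos (hu : u ∈ Ioc 0 1) : 0 < omegaU t u :=
  (rpow_pos_of_pos hu.1 0).trans_le (rpow_le_omegaU hu (min_le_right t 0))

lemma omegaU_of_pos (ht : 0 < t) : omegaU t u = 1 := by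
  simp [omegaU, ht.ne', min_eq_right ht.le]

lemma omegaU_le_rpow (hu : u ∈ Ioc 0 1) {ε : ℝ} (hε : 0 < ε) :
    omegaU t u ≤ (1 + 1 / ε) * u ^ (min t 0 - ε) := by
  unfold omegaU
  split_ifs with ht
  · simpa [ht] using log_exp_div_le hu hε
  · calc u ^ min t 0 ≤ u ^ (min t 0 - ε) := rpow_le_rpow_of_exponent_ge hu.1 hu.2 (by linarith)
      _ ≤ (1 + 1 / ε) * u ^ (min t 0 - ε) :=
        le_mul_of_one_le_left (rpow_nonneg hu.1.le _) (by simp [hε.le])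

lemma omegaU_le_mul_omegaU_of_lt (hu : u ∈ Ioc 0 1) {b d : ℝ} (h : d < b) :
    omegaU b u ≤ (1 + 1 / (b - d)) * omegaU d u := by
  by_cases hb : b = 0
  · subst hb
    calc omegaU 0 u ≤ (1 + 1 / (0 - d)) * u ^ (min 0 0 - (0 - d)) :=
          omegaU_le_rpow hu (by linarith)
      _ ≤ (1 + 1 / (0 - d)) * omegaU d u := by
          gcongr
          exact rpow_le_omegaU hu (by simp)
  · calc omegaU b u = u ^ min b 0 := if_neg hb
      _ ≤ omegaU d u := rpow_le_omegaU hu (min_le_min_right 0 h.le)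
      _ ≤ (1 + 1 / (b - d)) * omegaU d u :=
          le_mul_of_one_le_left (omegaU_pos hu).le (by simp [(sub_pos.2 h).le])

end omegaU

lemma exists_omegaU_le_mul_of_le {b d : ℝ} (h : d ≤ b) :
    ∃ C > 0, ∀ u ∈ Ioc (0 : ℝ) 1, omegaU b u ≤ C * omegaU d u := by
  rcases h.eq_or_lt with rfl | h
  · exact ⟨1, one_pos, fun u _ => (one_mul _).ge⟩
  · exact ⟨1 + 1 / (b - d), add_pos one_pos (one_div_pos.2 (sub_pos.2 h)),
      fun u hu => omegaU_le_mul_omegaU_of_lt hu h⟩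

lemma exists_omegaU_mul_le {a b c d : ℝ} (hc : c ≤ a) (hd : d ≤ b) (h : d < a + b) :
    ∃ C > 0, ∀ u ∈ Ioc (0 : ℝ) 1,
      omegaU a u * omegaU b u ≤ C * (omegaU c u + omegaU d u) := by
  rcases lt_or_ge 0 a with ha | ha
  · obtain ⟨C, hC, hCb⟩ := exists_omegaU_le_mul_of_le hd
    refine ⟨C, hC, fun u hu => ?_⟩
    rw [omegaU_of_pos ha, one_mul]
    exact (hCb u hu).trans (by gcongr; exact le_add_of_nonneg_left (omegaU_pos hu).le)
  rcases lt_or_ge 0 b with hb | hb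
  · obtain ⟨C, hC, hCa⟩ := exists_omegaU_le_mul_of_le hc
    refine ⟨C, hC, fun u hu => ?_⟩
    rw [omegaU_of_pos hb, mul_one]
    exact (hCa u hu).trans (by gcongr; exact le_add_of_nonneg_right (omegaU_pos hu).le)
  set ε := (a + b - d) / 2 with hε_def
  have hε : 0 < ε := by linarith
  have hK : 0 < 1 + 1 / ε := add_pos one_pos (one_div_pos.2 hε)
  refine ⟨(1 + 1 / ε) ^ 2, pow_pos hK 2, fun u hu => ?_⟩
  have hωa : omegaU a u ≤ (1 + 1 / ε) * u ^ (a - ε) := by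
    simpa [min_eq_left ha] using omegaU_le_rpow (t := a) hu hε
  have hωb : omegaU b u ≤ (1 + 1 / ε) * u ^ (b - ε) := by
    simpa [min_eq_left hb] using omegaU_le_rpow (t := b) hu hε
  calc omegaU a u * omegaU b u
      ≤ ((1 + 1 / ε) * u ^ (a - ε)) * ((1 + 1 / ε) * u ^ (b - ε)) :=
        mul_le_mul hωa hωb (omegaU_pos hu).le
          (mul_nonneg hK.le (rpow_nonneg hu.1.le _))
    _ = (1 + 1 / ε) ^ 2 * u ^ d := by
        rw [mul_mul_mul_comm, ← rpow_add hu.1, hε_def]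
        ring_nf
    _ ≤ (1 + 1 / ε) ^ 2 * (omegaU c u + omegaU d u) := by
        gcongr
        exact (rpow_le_omegaU hu (min_le_left d 0)).trans
          (le_add_of_nonneg_left (omegaU_pos hu).le)

lemma exists_sum_le_mul_of_forall {ι α : Type*} (s : Finset ι) {f : ι → α → ℝ} {g : α → ℝ}
    {S : Set α} (hg : ∀ x ∈ S, 0 ≤ g x) (h : ∀ i ∈ s, ∃ C > 0, ∀ x ∈ S, f i x ≤ C * g x) :
    ∃ C > 0, ∀ x ∈ S, ∑ i ∈ s, f i x ≤ C * g x := by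
  classical
  induction s using Finset.induction_on with
  | empty => exact ⟨1, one_pos, fun x hx => by simpa using hg x hx⟩
  | insert j s hj ih =>
    obtain ⟨C₁, hC₁, h₁⟩ := h j (Finset.mem_insert_self j s)
    obtain ⟨C₂, hC₂, h₂⟩ := ih fun i hi => h i (Finset.mem_insert_of_mem hi)
    refine ⟨C₁ + C₂, add_pos hC₁ hC₂, fun x hx => ?_⟩
    rw [Finset.sum_insert hj, add_mul]
    exact add_le_add (h₁ x hx) (h₂ x hx)

theorem stmt1_general (n : ℕ) (ϑ τ : ℝ) (k : ℝ) (m : ℕ) (hϑ : 0 < ϑ) :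
    ∃ C > 0, ∀ z : EuclideanSpace ℂ (Fin n), ‖z‖ < 1 →
      ∑ i ∈ Finset.range (m + 1), omegaW (ϑ - i) ‖z‖ * omegaW (τ + i - k) ‖z‖ ≤
        C * (omegaW (ϑ - m) ‖z‖ + omegaW (τ - k) ‖z‖) := by
  obtain ⟨C, hC, hsum⟩ := exists_sum_le_mul_of_forall (Finset.range (m + 1))
    (f := fun (i : ℕ) u => omegaU (ϑ - i) u * omegaU (τ + i - k) u)
    (g := fun u => omegaU (ϑ - m) u + omegaU (τ - k) u) (S := Ioc 0 1)
    (fun u hu => (add_pos (omegaU_pos hu) (omegaU_pos hu)).le)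
    fun i hi => by
      have him : (i : ℝ) ≤ m := Nat.cast_le.2 (Nat.lt_succ_iff.1 (Finset.mem_range.1 hi))
      exact exists_omegaU_mul_le (by linarith) (by linarith [i.cast_nonneg (α := ℝ)])
        (by linarith)
  refine ⟨C, hC, fun z hz => hsum (1 - ‖z‖ ^ 2) ⟨?_, ?_⟩⟩ <;> nlinarith [norm_nonneg z]

theorem stmt1 (n : ℕ) (ϑ τ : ℝ) (k : ℝ) (m : ℕ) (hϑ : 0 < ϑ) (hτ : 0 < τ) :
    ∃ C > 0, ∀ z : EuclideanSpace ℂ (Fin n), ‖z‖ < 1 →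
      ∑ i ∈ Finset.range (m + 1), omegaW (ϑ - i) ‖z‖ * omegaW (τ + i - k) ‖z‖ ≤
        C * (omegaW (ϑ - m) ‖z‖ + omegaW (τ - k) ‖z‖) :=
  stmt1_general n ϑ τ k m hϑ
end

section
/- Let 0 < ϑ₀ ≤ τ₀ < 1/2, 0 < ϑ ≤ τ, integers m ≤ k with k > τ, m > ϑ. Then multiplication is bounded: ‖φψ‖_{G^{ϑ₀}_{ϑ,m}} ≤ C‖φ‖_{G^{τ₀}_{τ,k}}·‖ψ‖_{G^{ϑ₀}_{ϑ,m}} for all φ ∈ G^{τ₀}_{τ,k} and ψ ∈ G^{ϑ₀}_{ϑ,m}. -/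
open MeasureTheory Metric

variable {n : ℕ}

/-- The Wirtinger derivative `∂f/∂z_j = (∂f/∂x_j - i ∂f/∂y_j)/2`. -/
noncomputable def wirt (n : ℕ) (j : Fin n) (f : EuclideanSpace ℂ (Fin n) → ℂ)
    (z : EuclideanSpace ℂ (Fin n)) : ℂ :=
  (fderiv ℝ f z (EuclideanSpace.single j (1 : ℂ)) -
      Complex.I * fderiv ℝ f z (EuclideanSpace.single j (Complex.I))) / 2

/-- The conjugate Wirtinger derivative `∂f/∂z̄_j = (∂f/∂x_j + i ∂f/∂y_j)/2`. -/
noncomputable def wirtBar (n : ℕ) (j : Fin n) (f : EuclideanSpace ℂ (Fin n) → ℂ)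
    (z : EuclideanSpace ℂ (Fin n)) : ℂ :=
  (fderiv ℝ f z (EuclideanSpace.single j (1 : ℂ)) +
      Complex.I * fderiv ℝ f z (EuclideanSpace.single j (Complex.I))) / 2

/-- Iterated holomorphic partial derivative `∂_α` along a list of coordinate directions. -/
noncomputable def wirtIter (n : ℕ) (L : List (Fin n)) (f : EuclideanSpace ℂ (Fin n) → ℂ) :
    EuclideanSpace ℂ (Fin n) → ℂ :=
  L.foldr (fun j g => wirt n j g) f

/-- `|∂^j f(z)|`: the sum of the absolute values of all holomorphic partial derivatives
of order `j` of `f` at `z`. -/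
noncomputable def derNormSum (n : ℕ) (j : ℕ) (f : EuclideanSpace ℂ (Fin n) → ℂ)
    (z : EuclideanSpace ℂ (Fin n)) : ℝ :=
  ∑ v : Fin j → Fin n, ‖wirtIter n (List.ofFn v) f z‖

/-- The conjugate tangential derivative `D̄_{ij} f = z_i ∂̄_j f - z_j ∂̄_i f`. -/
noncomputable def tangBar (n : ℕ) (i j : Fin n) (f : EuclideanSpace ℂ (Fin n) → ℂ)
    (z : EuclideanSpace ℂ (Fin n)) : ℂ :=
  z i * wirtBar n j f z - z j * wirtBar n i f z

/-- `φ̃(z) = (1-|z|²)|∂̄φ(z)| + (1-|z|²)^{1/2}|∂̄_T φ(z)|`. -/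
noncomputable def tildeFn (n : ℕ) (f : EuclideanSpace ℂ (Fin n) → ℂ)
    (z : EuclideanSpace ℂ (Fin n)) : ℝ :=
  (1 - ‖z‖ ^ 2) * ∑ j : Fin n, ‖wirtBar n j f z‖ +
    Real.sqrt (1 - ‖z‖ ^ 2) *
      ∑ i : Fin n, ∑ j : Fin n, if i < j then ‖tangBar n i j f z‖ else 0

/-- `φ` belongs to `G^{τ₀}_{τ,k}` with norm (bound) `A`: `φ ∈ C^k(𝔹) ∩ C(𝔹̄)`,
`|∂^j φ(z)| ≤ A ω_{τ-j}(z)` for `0 ≤ j ≤ k`, and `φ̃(z) ≤ A (1-|z|²)^{τ₀}`. -/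
def InG (n : ℕ) (τ₀ τ : ℝ) (k : ℕ) (A : ℝ) (φ : EuclideanSpace ℂ (Fin n) → ℂ) : Prop :=
  ContDiffOn ℝ (k : ℕ∞) φ (ball (0 : EuclideanSpace ℂ (Fin n)) 1) ∧
    ContinuousOn φ (closedBall (0 : EuclideanSpace ℂ (Fin n)) 1) ∧
    (∀ j ≤ k, ∀ z ∈ ball (0 : EuclideanSpace ℂ (Fin n)) 1,
      derNormSum n j φ z ≤ A * omegaW (τ - j) ‖z‖) ∧
    ∀ z ∈ ball (0 : EuclideanSpace ℂ (Fin n)) 1, tildeFn n φ z ≤ A * (1 - ‖z‖ ^ 2) ^ τ₀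

/-!
By the Leibniz rule, a holomorphic derivative of order `j` of `φψ` is a sum of `2 ^ j`
products `∂^i φ · ∂^(j-i) ψ`, each bounded by `A B ω_{τ-i} ω_{ϑ-j+i} ≲ A B ω_{ϑ-j}`: the
exponents satisfy `(τ - i) + (ϑ - j + i) - (ϑ - j) = τ > 0`, which leaves room to absorb the
logarithm of `ω_0`. The quantity `φ̃` obeys a product rule, and `|φ| ≤ A`, `|ψ| ≤ B` since
`ω_τ = ω_ϑ = 1`; hence `tildeFn (φψ) ≤ 2AB(1-|z|²)^{ϑ₀}` because `ϑ₀ ≤ τ₀`.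
-/

open Topology

noncomputable def weight (t u : ℝ) : ℝ :=
  if t = 0 then Real.log (Real.exp 1 / u) else u ^ (min t 0)

lemma omegaW_eq_weight (t x : ℝ) : omegaW t x = weight t (1 - x ^ 2) := rfl

lemma weight_of_ne_zero {t : ℝ} (ht : t ≠ 0) (u : ℝ) : weight t u = u ^ (min t 0) := if_neg ht

lemma weight_of_pos {t : ℝ} (ht : 0 < t) (u : ℝ) : weight t u = 1 := by
  rw [weight_of_ne_zero ht.ne', min_eq_right ht.le, Real.rpow_zero]

lemma weight_zero {u : ℝ} (hu : 0 < u) : weight 0 u = 1 - Real.log u := by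
  rw [weight, if_pos rfl, Real.log_div (Real.exp_ne_zero 1) hu.ne', Real.log_exp]

lemma rpow_le_weight (t : ℝ) {u : ℝ} (hu : 0 < u) (hu1 : u ≤ 1) : u ^ (min t 0) ≤ weight t u := by
  rcases eq_or_ne t 0 with rfl | ht
  · rw [weight_zero hu, min_self, Real.rpow_zero]
    linarith [Real.log_nonpos hu.le hu1]
  · rw [weight_of_ne_zero ht]

lemma weight_pos (t : ℝ) {u : ℝ} (hu : 0 < u) (hu1 : u ≤ 1) : 0 < weight t u :=
  (Real.rpow_pos_of_pos hu _).trans_le (rpow_le_weight t hu hu1)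

lemma omegaW_pos (t : ℝ) {x : ℝ} (hx0 : 0 ≤ x) (hx1 : x < 1) : 0 < omegaW t x :=
  weight_pos t (by nlinarith) (by nlinarith)

-- `log v ≤ v - 1` at `v = u ^ (-ε)` gives `-log u ≤ (u ^ (-ε) - 1) / ε`.
lemma weight_zero_le {u ε : ℝ} (hu : 0 < u) (hu1 : u ≤ 1) (hε : 0 < ε) :
    weight 0 u ≤ (1 + 1 / ε) * u ^ (-ε) := by
  have hv : 1 ≤ u ^ (-ε) := Real.one_le_rpow_of_pos_of_le_one_of_nonpos hu hu1 (by linarith)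
  have hlog : -ε * Real.log u ≤ u ^ (-ε) - 1 := by
    rw [← Real.log_rpow hu]
    exact Real.log_le_sub_one_of_pos (Real.rpow_pos_of_pos hu _)
  have hlog' : -Real.log u ≤ (u ^ (-ε) - 1) / ε := by
    rw [le_div_iff₀ hε]
    linarith
  have hdiv : (u ^ (-ε) - 1) / ε ≤ u ^ (-ε) / ε := by gcongr; linarith
  rw [weight_zero hu, add_mul, one_mul, one_div_mul_eq_div]
  linarith

-- A logarithmic factor (`a = 0` or `b = 0`) is absorbed by the room `a + b - c > 0`.
lemma exists_weight_mul_le {a b c : ℝ} (hca : c ≤ a) (hcb : c ≤ b) (habc : 0 < a + b - c) :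
    ∃ C > 0, ∀ u : ℝ, 0 < u → u ≤ 1 → weight a u * weight b u ≤ C * weight c u := by
  wlog ha : a = 0 generalizing a b
  · by_cases hb : b = 0
    · obtain ⟨C, hC, h⟩ := this hcb hca (by linarith) hb
      exact ⟨C, hC, fun u hu hu1 => by rw [mul_comm]; exact h u hu hu1⟩
    · have hmin : min c 0 ≤ min a 0 + min b 0 := by
        simp only [min_def]
        split_ifs <;> linarith
      refine ⟨1, one_pos, fun u hu hu1 => ?_⟩
      rw [weight_of_ne_zero ha, weight_of_ne_zero hb, ← Real.rpow_add hu, one_mul]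
      exact (Real.rpow_le_rpow_of_exponent_ge hu hu1 hmin).trans (rpow_le_weight c hu hu1)
  subst ha
  rcases (show c ≤ 0 from hca).eq_or_lt with rfl | hc
  · refine ⟨1, one_pos, fun u _ _ => ?_⟩
    rw [weight_of_pos (t := b) (by linarith) u, mul_one, one_mul]
  by_cases hb : b = 0
  · subst hb
    have hε : 0 < -c / 2 := by linarith
    refine ⟨(1 + 1 / (-c / 2)) ^ 2, by positivity, fun u hu hu1 => ?_⟩
    have h := weight_zero_le hu hu1 hε
    calc weight 0 u * weight 0 u
        ≤ ((1 + 1 / (-c / 2)) * u ^ (-(-c / 2))) * ((1 + 1 / (-c / 2)) * u ^ (-(-c / 2))) :=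
          mul_le_mul h h (weight_pos 0 hu hu1).le (by positivity)
      _ = (1 + 1 / (-c / 2)) ^ 2 * u ^ c := by
          rw [mul_mul_mul_comm, ← Real.rpow_add hu]; ring_nf
      _ = (1 + 1 / (-c / 2)) ^ 2 * weight c u := by
          rw [weight_of_ne_zero hc.ne, min_eq_left hc.le]
  · set ε := min b 0 - c
    have hε : 0 < ε := sub_pos.2 (lt_min (by linarith) hc)
    refine ⟨1 + 1 / ε, by positivity, fun u hu hu1 => ?_⟩
    calc weight 0 u * weight b u ≤ ((1 + 1 / ε) * u ^ (-ε)) * u ^ (min b 0) := by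
          rw [weight_of_ne_zero hb]
          exact mul_le_mul_of_nonneg_right (weight_zero_le hu hu1 hε) (by positivity)
      _ = (1 + 1 / ε) * u ^ c := by
          rw [mul_assoc, ← Real.rpow_add hu, show -ε + min b 0 = c by ring]
      _ = (1 + 1 / ε) * weight c u := by
          rw [weight_of_ne_zero hc.ne, min_eq_left hc.le]

lemma exists_weight_mul_le_uniform {τ ϑ : ℝ} (hτ : 0 < τ) (hϑτ : ϑ ≤ τ) (m : ℕ) :
    ∃ C ≥ 0, ∀ i j : ℕ, i + j ≤ m → ∀ u : ℝ, 0 < u → u ≤ 1 →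
      weight (τ - i) u * weight (ϑ - j) u ≤ C * weight (ϑ - (i + j : ℕ)) u := by
  have h : ∀ p : ℕ × ℕ, ∃ C > 0, ∀ u : ℝ, 0 < u → u ≤ 1 →
      weight (τ - p.1) u * weight (ϑ - p.2) u ≤ C * weight (ϑ - (p.1 + p.2 : ℕ)) u := fun p => by
    have hp : (0 : ℝ) ≤ p.1 := p.1.cast_nonneg
    have hq : (0 : ℝ) ≤ p.2 := p.2.cast_nonneg
    exact exists_weight_mul_le (by push_cast; linarith) (by push_cast; linarith)
      (by push_cast; linarith)
  choose C hC hCw using h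
  refine ⟨∑ p ∈ Finset.range (m + 1) ×ˢ Finset.range (m + 1), C p,
    Finset.sum_nonneg fun p _ => (hC p).le, fun i j hij u hu hu1 => ?_⟩
  refine (hCw (i, j) u hu hu1).trans (mul_le_mul_of_nonneg_right ?_ (weight_pos _ hu hu1).le)
  exact Finset.single_le_sum (f := C) (fun p _ => (hC p).le)
    (by simp only [Finset.mem_product, Finset.mem_range]; omega)

lemma DifferentiableAt.list_sum {𝕜 E F ι : Type*} [NontriviallyNormedField 𝕜]
    [NormedAddCommGroup E] [NormedSpace 𝕜 E] [NormedAddCommGroup F] [NormedSpace 𝕜 F]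
    {x : E} {l : List ι} {A : ι → E → F} (h : ∀ i ∈ l, DifferentiableAt 𝕜 (A i) x) :
    DifferentiableAt 𝕜 (fun y => (l.map (A · y)).sum) x := by
  induction l with
  | nil => exact differentiableAt_const 0
  | cons a l ih =>
    simp only [List.map_cons, List.sum_cons]
    exact (h a List.mem_cons_self).add (ih fun i hi => h i (List.mem_cons_of_mem a hi))

section Wirtinger

variable {f g : EuclideanSpace ℂ (Fin n) → ℂ} {z : EuclideanSpace ℂ (Fin n)}
  {s : Set (EuclideanSpace ℂ (Fin n))}

lemma wirtIter_cons (a : Fin n) (L : List (Fin n)) (f : EuclideanSpace ℂ (Fin n) → ℂ) :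
    wirtIter n (a :: L) f = wirt n a (wirtIter n L f) := rfl

lemma Filter.EventuallyEq.wirt_eq (h : f =ᶠ[𝓝 z] g) (j : Fin n) : wirt n j f z = wirt n j g z := by
  simp only [wirt, h.fderiv_eq]

lemma wirt_add (hf : DifferentiableAt ℝ f z) (hg : DifferentiableAt ℝ g z) (j : Fin n) :
    wirt n j (fun w => f w + g w) z = wirt n j f z + wirt n j g z := by
  simp only [wirt, fderiv_fun_add hf hg, add_apply]
  ring

lemma wirt_mul (hf : DifferentiableAt ℝ f z) (hg : DifferentiableAt ℝ g z) (j : Fin n) :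
    wirt n j (fun w => f w * g w) z = f z * wirt n j g z + g z * wirt n j f z := by
  simp only [wirt, fderiv_fun_mul hf hg, add_apply, smul_apply, smul_eq_mul]
  ring

lemma wirtBar_mul (hf : DifferentiableAt ℝ f z) (hg : DifferentiableAt ℝ g z) (j : Fin n) :
    wirtBar n j (f * g) z = f z * wirtBar n j g z + g z * wirtBar n j f z := by
  simp only [wirtBar, Pi.mul_def, fderiv_fun_mul hf hg, add_apply, smul_apply, smul_eq_mul]
  ring

lemma wirt_list_sum {ι : Type*} {l : List ι} {F : ι → EuclideanSpace ℂ (Fin n) → ℂ}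
    (hF : ∀ i ∈ l, DifferentiableAt ℝ (F i) z) (j : Fin n) :
    wirt n j (fun w => (l.map (F · w)).sum) z = (l.map fun i => wirt n j (F i) z).sum := by
  induction l with
  | nil => simp [wirt]
  | cons a l ih =>
    have hl : ∀ i ∈ l, DifferentiableAt ℝ (F i) z := fun i hi => hF i (List.mem_cons_of_mem a hi)
    simp only [List.map_cons, List.sum_cons]
    rw [wirt_add (hF a List.mem_cons_self) (DifferentiableAt.list_sum hl), ih hl]

lemma contDiffOn_wirt {M : ℕ} (hf : ContDiffOn ℝ ((M + 1 : ℕ) : ℕ∞) f s) (hs : IsOpen s)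
    (j : Fin n) : ContDiffOn ℝ (M : ℕ∞) (wirt n j f) s := by
  have hd : ContDiffOn ℝ (M : ℕ∞) (fderiv ℝ f) s :=
    hf.fderiv_of_isOpen hs (by exact_mod_cast le_rfl)
  exact ((hd.clm_apply contDiffOn_const).sub
    (contDiffOn_const.mul (hd.clm_apply contDiffOn_const))).div_const 2

lemma contDiffOn_wirtIter {M : ℕ} (hf : ContDiffOn ℝ (M : ℕ∞) f s) (hs : IsOpen s)
    {L : List (Fin n)} (hL : L.length ≤ M) :
    ContDiffOn ℝ ((M - L.length : ℕ) : ℕ∞) (wirtIter n L f) s := by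
  induction L with
  | nil => simpa [wirtIter] using hf
  | cons a L ih =>
    have h := ih (by simp at hL; omega)
    rw [show M - L.length = M - (a :: L).length + 1 by simp at hL ⊢; omega] at h
    exact contDiffOn_wirt h hs a

lemma differentiableAt_wirtIter {M : ℕ} (hf : ContDiffOn ℝ (M : ℕ∞) f s)
    (hs : IsOpen s) {L : List (Fin n)} (hL : L.length < M) (hz : z ∈ s) :
    DifferentiableAt ℝ (wirtIter n L f) z := by
  have h : M - L.length ≠ 0 := by omega
  exact ((contDiffOn_wirtIter hf hs hL.le).differentiableOn (by exact_mod_cast h)).differentiableAt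
    (hs.mem_nhds hz)

end Wirtinger

/-- All ways of distributing the letters of a word into two complementary subwords. -/
def subwordSplits {α : Type*} : List α → List (List α × List α)
  | [] => [([], [])]
  | a :: L => (subwordSplits L).map (fun pq => (a :: pq.1, pq.2)) ++
      (subwordSplits L).map (fun pq => (pq.1, a :: pq.2))

lemma length_add_length_of_mem_subwordSplits {α : Type*} {L : List α} {pq : List α × List α}
    (h : pq ∈ subwordSplits L) : pq.1.length + pq.2.length = L.length := by
  induction L generalizing pq with
  | nil => simp_all [subwordSplits]
  | cons a L ih =>
    simp only [subwordSplits, List.mem_append, List.mem_map] at h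
    rcases h with ⟨q, hq, rfl⟩ | ⟨q, hq, rfl⟩ <;>
      simp only [List.length_cons] <;> have := ih hq <;> omega

lemma length_subwordSplits {α : Type*} (L : List α) :
    (subwordSplits L).length = 2 ^ L.length := by
  induction L with
  | nil => rfl
  | cons a L ih => simp [subwordSplits, ih, pow_succ, mul_two]

lemma wirtIter_mul {M : ℕ} {φ ψ : EuclideanSpace ℂ (Fin n) → ℂ}
    {s : Set (EuclideanSpace ℂ (Fin n))} (hs : IsOpen s)
    (hφ : ContDiffOn ℝ (M : ℕ∞) φ s) (hψ : ContDiffOn ℝ (M : ℕ∞) ψ s)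
    {L : List (Fin n)} (hL : L.length ≤ M) {z : EuclideanSpace ℂ (Fin n)} (hz : z ∈ s) :
    wirtIter n L (fun w => φ w * ψ w) z =
      ((subwordSplits L).map fun pq => wirtIter n pq.1 φ z * wirtIter n pq.2 ψ z).sum := by
  induction L generalizing z with
  | nil => simp [subwordSplits, wirtIter]
  | cons a L ih =>
    have hLM : L.length < M := by simp at hL; omega
    have hd : ∀ pq ∈ subwordSplits L, DifferentiableAt ℝ (wirtIter n pq.1 φ) z ∧
        DifferentiableAt ℝ (wirtIter n pq.2 ψ) z := fun pq hpq => by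
      have := length_add_length_of_mem_subwordSplits hpq
      exact ⟨differentiableAt_wirtIter hφ hs (by omega) hz,
        differentiableAt_wirtIter hψ hs (by omega) hz⟩
    have hloc : wirtIter n L (fun w => φ w * ψ w) =ᶠ[𝓝 z] fun w =>
        ((subwordSplits L).map fun pq => wirtIter n pq.1 φ w * wirtIter n pq.2 ψ w).sum :=
      Filter.eventually_of_mem (hs.mem_nhds hz) fun w hw => ih hLM.le hw
    rw [wirtIter_cons, hloc.wirt_eq,
      wirt_list_sum (F := fun pq w => wirtIter n pq.1 φ w * wirtIter n pq.2 ψ w)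
        (fun pq hpq => (hd pq hpq).1.mul (hd pq hpq).2),
      List.map_congr_left fun pq hpq => wirt_mul (hd pq hpq).1 (hd pq hpq).2 a]
    simp only [subwordSplits, List.map_append, List.map_map, List.sum_append, List.sum_map_add,
      Function.comp_def, wirtIter_cons]
    rw [add_comm]
    congr 2
    exact List.map_congr_left fun _ _ => mul_comm _ _

section Bounds

variable {f φ ψ : EuclideanSpace ℂ (Fin n) → ℂ} {z : EuclideanSpace ℂ (Fin n)}

lemma derNormSum_nonneg (j : ℕ) : 0 ≤ derNormSum n j f z :=
  Finset.sum_nonneg fun _ _ => norm_nonneg _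

lemma derNormSum_zero : derNormSum n 0 f z = ‖f z‖ := by
  simp [derNormSum, wirtIter]

lemma norm_wirtIter_le_derNormSum (L : List (Fin n)) :
    ‖wirtIter n L f z‖ ≤ derNormSum n L.length f z := by
  simpa [derNormSum] using Finset.single_le_sum (f := fun v : Fin L.length → Fin n =>
    ‖wirtIter n (List.ofFn v) f z‖) (fun _ _ => norm_nonneg _) (Finset.mem_univ L.get)

lemma derNormSum_mul_le {M : ℕ} {s : Set (EuclideanSpace ℂ (Fin n))} (hs : IsOpen s)
    (hφ : ContDiffOn ℝ (M : ℕ∞) φ s) (hψ : ContDiffOn ℝ (M : ℕ∞) ψ s) (hz : z ∈ s)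
    {j : ℕ} (hj : j ≤ M) {K : ℝ}
    (hK : ∀ i l : ℕ, i + l = j → derNormSum n i φ z * derNormSum n l ψ z ≤ K) :
    derNormSum n j (φ * ψ) z ≤ (2 * n) ^ j * K := by
  have hv : ∀ v : Fin j → Fin n, ‖wirtIter n (List.ofFn v) (φ * ψ) z‖ ≤ 2 ^ j * K := by
    intro v
    rw [Pi.mul_def, wirtIter_mul hs hφ hψ (by simpa using hj) hz]
    refine (List.le_sum_of_subadditive norm norm_zero.le norm_add_le _).trans ?_
    rw [List.map_map]
    refine (List.sum_le_card_nsmul _ K ?_).trans_eq ?_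
    · simp only [List.mem_map, Function.comp_apply, norm_mul]
      rintro _ ⟨pq, hpq, rfl⟩
      have hlen := length_add_length_of_mem_subwordSplits hpq
      exact (mul_le_mul (norm_wirtIter_le_derNormSum _) (norm_wirtIter_le_derNormSum _)
        (norm_nonneg _) (derNormSum_nonneg _)).trans (hK _ _ (by simpa using hlen))
    · simp [length_subwordSplits]
  calc derNormSum n j (φ * ψ) z ≤ ∑ _v : Fin j → Fin n, 2 ^ j * K :=
        Finset.sum_le_sum fun v _ => hv v
    _ = (2 * n) ^ j * K := by simp [mul_pow]; ring

end Bounds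

section Tilde

variable {φ ψ : EuclideanSpace ℂ (Fin n) → ℂ} {z : EuclideanSpace ℂ (Fin n)}

lemma tangBar_mul (hφ : DifferentiableAt ℝ φ z) (hψ : DifferentiableAt ℝ ψ z) (i j : Fin n) :
    tangBar n i j (φ * ψ) z = φ z * tangBar n i j ψ z + ψ z * tangBar n i j φ z := by
  simp only [tangBar, wirtBar_mul hφ hψ]
  ring

lemma tildeFn_nonneg (hz : ‖z‖ ≤ 1) : 0 ≤ tildeFn n φ z := by
  have hu : 0 ≤ 1 - ‖z‖ ^ 2 := by nlinarith [norm_nonneg z]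
  unfold tildeFn
  positivity

lemma tildeFn_mul_le (hz : ‖z‖ ≤ 1) (hφ : DifferentiableAt ℝ φ z)
    (hψ : DifferentiableAt ℝ ψ z) :
    tildeFn n (φ * ψ) z ≤ ‖φ z‖ * tildeFn n ψ z + ‖ψ z‖ * tildeFn n φ z := by
  have hu : 0 ≤ 1 - ‖z‖ ^ 2 := by nlinarith [norm_nonneg z]
  have hprod : ∀ a b x y : ℂ, ‖a * x + b * y‖ ≤ ‖a‖ * ‖x‖ + ‖b‖ * ‖y‖ := fun a b x y =>
    (norm_add_le _ _).trans_eq (by rw [norm_mul, norm_mul])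
  have hbar : ∑ j, ‖wirtBar n j (φ * ψ) z‖ ≤
      ‖φ z‖ * ∑ j, ‖wirtBar n j ψ z‖ + ‖ψ z‖ * ∑ j, ‖wirtBar n j φ z‖ := by
    simp only [Finset.mul_sum, ← Finset.sum_add_distrib]
    gcongr with j
    rw [wirtBar_mul hφ hψ]
    exact hprod _ _ _ _
  have htang : (∑ i, ∑ j, if i < j then ‖tangBar n i j (φ * ψ) z‖ else 0) ≤
      ‖φ z‖ * (∑ i, ∑ j, if i < j then ‖tangBar n i j ψ z‖ else 0) +
        ‖ψ z‖ * (∑ i, ∑ j, if i < j then ‖tangBar n i j φ z‖ else 0) := by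
    simp only [Finset.mul_sum, ← Finset.sum_add_distrib]
    gcongr with i _ j
    split_ifs
    · rw [tangBar_mul hφ hψ]
      exact hprod _ _ _ _
    · simp
  unfold tildeFn
  calc _ ≤ (1 - ‖z‖ ^ 2) * (‖φ z‖ * ∑ j, ‖wirtBar n j ψ z‖ + ‖ψ z‖ * ∑ j, ‖wirtBar n j φ z‖) +
        √(1 - ‖z‖ ^ 2) * (‖φ z‖ * (∑ i, ∑ j, if i < j then ‖tangBar n i j ψ z‖ else 0) +
          ‖ψ z‖ * (∑ i, ∑ j, if i < j then ‖tangBar n i j φ z‖ else 0)) := by gcongr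
    _ = _ := by ring

end Tilde

section InG

variable {τ₀ τ ϑ₀ ϑ A B : ℝ} {k m : ℕ} {φ ψ : EuclideanSpace ℂ (Fin n) → ℂ}
  {z : EuclideanSpace ℂ (Fin n)}

lemma InG.norm_le (h : InG n τ₀ τ k A φ) (hτ : 0 < τ) (hz : z ∈ ball 0 1) : ‖φ z‖ ≤ A := by
  simpa [derNormSum_zero, omegaW_eq_weight, weight_of_pos hτ] using h.2.2.1 0 k.zero_le z hz

lemma InG.differentiableAt (h : InG n τ₀ τ k A φ) (hk : k ≠ 0) (hz : z ∈ ball 0 1) :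
    DifferentiableAt ℝ φ z :=
  (h.1.differentiableOn (by exact_mod_cast hk)).differentiableAt (isOpen_ball.mem_nhds hz)

lemma InG.derNormSum_mul_le_omegaW (hφ : InG n τ₀ τ k A φ) (hψ : InG n ϑ₀ ϑ m B ψ) (hmk : m ≤ k)
    (hA : 0 ≤ A) (hB : 0 ≤ B) {C₀ : ℝ}
    (hC₀ : ∀ i j : ℕ, i + j ≤ m → ∀ u : ℝ, 0 < u → u ≤ 1 →
      weight (τ - i) u * weight (ϑ - j) u ≤ C₀ * weight (ϑ - (i + j : ℕ)) u)
    {j : ℕ} (hj : j ≤ m) (hz : z ∈ ball 0 1) :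
    derNormSum n j (φ * ψ) z ≤ (2 * n) ^ j * C₀ * A * B * omegaW (ϑ - j) ‖z‖ := by
  have hz1 : ‖z‖ < 1 := mem_ball_zero_iff.1 hz
  have hu : 0 < 1 - ‖z‖ ^ 2 := by nlinarith [norm_nonneg z]
  have hu1 : 1 - ‖z‖ ^ 2 ≤ 1 := by nlinarith [norm_nonneg z]
  refine (derNormSum_mul_le isOpen_ball (hφ.1.of_le (by exact_mod_cast hmk)) hψ.1 hz hj
    (K := C₀ * A * B * omegaW (ϑ - j) ‖z‖) ?_).trans_eq (by ring)
  rintro i l rfl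
  calc derNormSum n i φ z * derNormSum n l ψ z
      ≤ (A * omegaW (τ - i) ‖z‖) * (B * omegaW (ϑ - l) ‖z‖) :=
        mul_le_mul (hφ.2.2.1 i (by omega) z hz) (hψ.2.2.1 l (by omega) z hz)
          (derNormSum_nonneg _) (mul_nonneg hA (omegaW_pos _ (norm_nonneg z) hz1).le)
    _ = A * B * (weight (τ - i) (1 - ‖z‖ ^ 2) * weight (ϑ - l) (1 - ‖z‖ ^ 2)) := by
        rw [omegaW_eq_weight, omegaW_eq_weight]; ring
    _ ≤ A * B * (C₀ * weight (ϑ - (i + l : ℕ)) (1 - ‖z‖ ^ 2)) :=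
        mul_le_mul_of_nonneg_left (hC₀ i l hj _ hu hu1) (mul_nonneg hA hB)
    _ = C₀ * A * B * omegaW (ϑ - (i + l : ℕ)) ‖z‖ := by rw [omegaW_eq_weight]; ring

lemma InG.tildeFn_mul_le_rpow (hφ : InG n τ₀ τ k A φ) (hψ : InG n ϑ₀ ϑ m B ψ) (hA : 0 ≤ A)
    (hB : 0 ≤ B) (hϑ₀τ₀ : ϑ₀ ≤ τ₀) (hτ : 0 < τ) (hϑ : 0 < ϑ) (hk : k ≠ 0) (hm : m ≠ 0)
    (hz : z ∈ ball 0 1) :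
    tildeFn n (φ * ψ) z ≤ 2 * A * B * (1 - ‖z‖ ^ 2) ^ ϑ₀ := by
  have hz1 : ‖z‖ < 1 := mem_ball_zero_iff.1 hz
  have hu : 0 < 1 - ‖z‖ ^ 2 := by nlinarith [norm_nonneg z]
  have hu1 : 1 - ‖z‖ ^ 2 ≤ 1 := by nlinarith [norm_nonneg z]
  have hτ₀ : (1 - ‖z‖ ^ 2) ^ τ₀ ≤ (1 - ‖z‖ ^ 2) ^ ϑ₀ :=
    Real.rpow_le_rpow_of_exponent_ge hu hu1 hϑ₀τ₀
  calc tildeFn n (φ * ψ) z ≤ ‖φ z‖ * tildeFn n ψ z + ‖ψ z‖ * tildeFn n φ z :=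
        tildeFn_mul_le hz1.le (hφ.differentiableAt hk hz) (hψ.differentiableAt hm hz)
    _ ≤ A * (B * (1 - ‖z‖ ^ 2) ^ ϑ₀) + B * (A * (1 - ‖z‖ ^ 2) ^ τ₀) := by
        gcongr
        · exact tildeFn_nonneg hz1.le
        · exact hφ.norm_le hτ hz
        · exact hψ.2.2.2 z hz
        · exact tildeFn_nonneg hz1.le
        · exact hψ.norm_le hϑ hz
        · exact hφ.2.2.2 z hz
    _ ≤ 2 * A * B * (1 - ‖z‖ ^ 2) ^ ϑ₀ := by nlinarith [mul_nonneg hA hB]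

end InG

theorem stmt12_general (n : ℕ) (τ₀ τ ϑ₀ ϑ : ℝ) (k m : ℕ)
    (h2 : ϑ₀ ≤ τ₀) (h4 : 0 < ϑ) (h5 : ϑ ≤ τ)
    (h6 : m ≤ k) (h8 : ϑ < m) :
    ∃ C > 0, ∀ (φ ψ : EuclideanSpace ℂ (Fin n) → ℂ) (A B : ℝ), 0 ≤ A → 0 ≤ B →
      InG n τ₀ τ k A φ → InG n ϑ₀ ϑ m B ψ → InG n ϑ₀ ϑ m (C * A * B) (φ * ψ) := by
  have hτ : 0 < τ := h4.trans_le h5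
  have hm : m ≠ 0 := by rintro rfl; norm_num at h8; linarith
  obtain ⟨C₀, hC₀, hweight⟩ := exists_weight_mul_le_uniform hτ h5 m
  refine ⟨2 + (2 * n + 2) ^ m * C₀, by positivity, fun φ ψ A B hA hB hφ hψ => ?_⟩
  refine ⟨(hφ.1.of_le (by exact_mod_cast h6)).mul hψ.1, hφ.2.1.mul hψ.2.1,
    fun j hj z hz => ?_, fun z hz => ?_⟩
  · have hω := omegaW_pos (ϑ - j) (norm_nonneg z) (mem_ball_zero_iff.1 hz)
    have hpow : (2 * n : ℝ) ^ j ≤ (2 * n + 2) ^ m :=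
      (pow_le_pow_left₀ (by positivity) (by linarith) j).trans
        (pow_le_pow_right₀ (by linarith) hj)
    calc derNormSum n j (φ * ψ) z ≤ (2 * n) ^ j * C₀ * A * B * omegaW (ϑ - j) ‖z‖ :=
          hφ.derNormSum_mul_le_omegaW hψ h6 hA hB hweight hj hz
      _ ≤ _ := by gcongr; nlinarith
  · have hu : 0 ≤ (1 - ‖z‖ ^ 2) ^ ϑ₀ :=
      Real.rpow_nonneg (by nlinarith [norm_nonneg z, mem_ball_zero_iff.1 hz]) ϑ₀
    calc tildeFn n (φ * ψ) z ≤ 2 * A * B * (1 - ‖z‖ ^ 2) ^ ϑ₀ :=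
          hφ.tildeFn_mul_le_rpow hψ hA hB h2 hτ h4 (by omega) hm hz
      _ ≤ _ := by gcongr; nlinarith [pow_nonneg (by positivity : (0 : ℝ) ≤ 2 * n + 2) m]

/-- Boundedness of multiplication: `‖φψ‖_{G^{ϑ₀}_{ϑ,m}} ≲ ‖φ‖_{G^{τ₀}_{τ,k}} ‖ψ‖_{G^{ϑ₀}_{ϑ,m}}`. -/
theorem stmt12 (n : ℕ) (τ₀ τ ϑ₀ ϑ : ℝ) (k m : ℕ)
    (h1 : 0 < ϑ₀) (h2 : ϑ₀ ≤ τ₀) (h3 : τ₀ < 1 / 2) (h4 : 0 < ϑ) (h5 : ϑ ≤ τ)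
    (h6 : m ≤ k) (h7 : τ < k) (h8 : ϑ < m) :
    ∃ C > 0, ∀ (φ ψ : EuclideanSpace ℂ (Fin n) → ℂ) (A B : ℝ), 0 ≤ A → 0 ≤ B →
      InG n τ₀ τ k A φ → InG n ϑ₀ ϑ m B ψ → InG n ϑ₀ ϑ m (C * A * B) (φ * ψ) :=
  stmt12_general n τ₀ τ ϑ₀ ϑ k m h2 h4 h5 h6 h8
end
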